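/- Let T be a ℂ-linear functional on D^{{M_p}} which is a Roumieu ultradistribution, and assume that there exists θ ∈ D^{{M_p}} with θ(x) = 1 for all |x| ≤ 1. Suppose that there exists (r_p) ∈ ℜ such that for every ε > 0 there is a compact set K ⊂ ℝ^d with |T(φ)| ≤ ε ‖φ‖_{(r_p)} for all φ ∈ D^{{M_p}} with supp φ ∩ K = ∅. Then for every ℜ-approximate unit (π_n) the sequence (T(π_n)) is a Cauchy sequence in ℂ. -/

import Mathlib

open scoped ENNReal BigOperators

noncomputable section

/-- `ℝ^d` modeled as Euclidean space. -/
abbrev Euc (d : ℕ) := EuclideanSpace ℝ (Fin d)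

/-- The partial derivative `∂_i φ` of a function `φ : ℝ^d → ℂ`. -/
noncomputable def pderivI {d : ℕ} (i : Fin d) (φ : Euc d → ℂ) : Euc d → ℂ :=
  fun x => fderiv ℝ φ x (EuclideanSpace.single i 1)

/-- The multi-index partial derivative `∂^k φ = ∂_1^{k_1} ⋯ ∂_d^{k_d} φ`. -/
noncomputable def mderiv {d : ℕ} (k : Fin d → ℕ) (φ : Euc d → ℂ) : Euc d → ℂ :=
  (List.finRange d).foldr (fun i ψ => (pderivI i)^[k i] ψ) φ

/-- The class ℜ of sequences with `r 0 = 1` monotonically increasing to infinity. -/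
def RClass (r : ℕ → ℝ) : Prop :=
  r 0 = 1 ∧ Monotone r ∧ Filter.Tendsto r Filter.atTop Filter.atTop

/-- The product sequence `R_p = ∏_{i=0}^p r_i`. -/
noncomputable def prodSeq (r : ℕ → ℝ) (p : ℕ) : ℝ :=
  ∏ i ∈ Finset.range (p + 1), r i

/-- The seminorm `q_{K,h}(φ)`, with values in `[0,∞]`. -/
noncomputable def qnormK {d : ℕ} (M : ℕ → ℝ) (K : Set (Euc d)) (h : ℝ)
    (φ : Euc d → ℂ) : ℝ≥0∞ :=
  ⨆ (k : Fin d → ℕ) (x : K), ENNReal.ofReal (‖mderiv k φ x‖ / (h ^ (∑ i, k i) * M (∑ i, k i)))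

/-- The seminorm `sup_{k,x∈K} |∂^k φ(x)|/(R_{|k|} M_k)`, with values in `[0,∞]`. -/
noncomputable def qrnormK {d : ℕ} (M : ℕ → ℝ) (r : ℕ → ℝ) (K : Set (Euc d))
    (φ : Euc d → ℂ) : ℝ≥0∞ :=
  ⨆ (k : Fin d → ℕ) (x : K),
    ENNReal.ofReal (‖mderiv k φ x‖ / (prodSeq r (∑ i, k i) * M (∑ i, k i)))

/-- The norm `‖φ‖_{∞,h}`, with values in `[0,∞]`. -/
noncomputable def hnorm {d : ℕ} (M : ℕ → ℝ) (h : ℝ) (φ : Euc d → ℂ) : ℝ≥0∞ :=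
  ⨆ (k : Fin d → ℕ) (x : Euc d),
    ENNReal.ofReal (‖mderiv k φ x‖ / (h ^ (∑ i, k i) * M (∑ i, k i)))

/-- The norm `‖φ‖_{(r_p)}`, with values in `[0,∞]`. -/
noncomputable def rnorm {d : ℕ} (M : ℕ → ℝ) (r : ℕ → ℝ) (φ : Euc d → ℂ) : ℝ≥0∞ :=
  ⨆ (k : Fin d → ℕ) (x : Euc d),
    ENNReal.ofReal (‖mderiv k φ x‖ / (prodSeq r (∑ i, k i) * M (∑ i, k i)))

/-- Membership in the space `D^{{M_p}}` of Roumieu test functions. -/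
def IsDMp {d : ℕ} (M : ℕ → ℝ) (φ : Euc d → ℂ) : Prop :=
  ContDiff ℝ (⊤ : ℕ∞) φ ∧ HasCompactSupport φ ∧ ∃ h > 0, hnorm M h φ < ⊤

/-- `T` is a ℂ-linear functional on `D^{{M_p}}`. -/
def LinearOnD {d : ℕ} (M : ℕ → ℝ) (T : (Euc d → ℂ) → ℂ) : Prop :=
  (∀ φ ψ, IsDMp M φ → IsDMp M ψ → T (φ + ψ) = T φ + T ψ) ∧
  (∀ (c : ℂ) (φ), IsDMp M φ → T (c • φ) = c * T φ)

/-- `T` is a Roumieu ultradistribution. -/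
def IsRoumieuUD {d : ℕ} (M : ℕ → ℝ) (T : (Euc d → ℂ) → ℂ) : Prop :=
  ∀ K : Set (Euc d), IsCompact K →
    ∃ s, RClass s ∧ ∃ C > 0, ∀ φ, IsDMp M φ → tsupport φ ⊆ K →
      ENNReal.ofReal ‖T φ‖ ≤ ENNReal.ofReal C * rnorm M s φ

/-- `u` is an ℜ-approximate unit. -/
def IsRApproxUnit {d : ℕ} (M : ℕ → ℝ) (u : ℕ → Euc d → ℂ) : Prop :=
  (∀ n, IsDMp M (u n)) ∧
  (∀ r, RClass r → (⨆ n, rnorm M r (u n)) < ⊤) ∧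
  (∀ K : Set (Euc d), IsCompact K → ∃ h > 0,
    Filter.Tendsto (fun n => qnormK M K h (fun x => u n x - 1)) Filter.atTop (nhds 0))

/-- `u` is a special ℜ-approximate unit. -/
def IsSpecialRApproxUnit {d : ℕ} (M : ℕ → ℝ) (u : ℕ → Euc d → ℂ) : Prop :=
  IsRApproxUnit M u ∧
  ∀ K : Set (Euc d), IsCompact K → ∃ n₀, ∀ n ≥ n₀, ∀ x ∈ K, u n x = 1

/-- Condition (M.1): `M_p^2 ≤ M_{p-1} M_{p+1}` for `p ≥ 1`. -/
def CondM1 (M : ℕ → ℝ) : Prop := ∀ p : ℕ, M (p + 1) ^ 2 ≤ M p * M (p + 2)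

/-- Condition (M.2). -/
def CondM2 (M : ℕ → ℝ) : Prop :=
  ∃ A > 0, ∃ H ≥ (1 : ℝ), ∀ p q : ℕ, q ≤ p → M p ≤ A * H ^ p * M q * M (p - q)

/-- Condition (M.3). -/
def CondM3 (M : ℕ → ℝ) : Prop :=
  ∃ A > 0, ∀ q : ℕ, 1 ≤ q →
    ∑' p : ℕ, M (q + p) / M (q + p + 1) ≤ A * q * M q / M (q + 1)

namespace Aux
variable {d : ℕ}

lemma foldr_congr_mem {α β : Type*} (l : List α) (f g : α → β → β) (b : β)
    (h : ∀ a ∈ l, f a = g a) : l.foldr f b = l.foldr g b := by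
  induction l with
  | nil => rfl
  | cons a t ih =>
    simp only [List.foldr_cons, h a List.mem_cons_self,
      ih (fun a ha => h a (List.mem_cons_of_mem _ ha))]

lemma mderiv_zero (φ : Euc d → ℂ) : mderiv (fun _ => 0) φ = φ := by
  unfold mderiv
  induction (List.finRange d) with
  | nil => rfl
  | cons a t ih => simpa using ih

lemma foldr_struct_aux (k : Fin d → ℕ) (i : Fin d) (φ : Euc d → ℂ)
    (hk : ∀ j, j < i → k j = 0) :
    ∀ l : List (Fin d), i ∈ l → l.Pairwise (· < ·) →
      l.foldr (fun j ψ => (pderivI j)^[((k + Pi.single i 1 : Fin d → ℕ)) j] ψ) φ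
        = pderivI i (l.foldr (fun j ψ => (pderivI j)^[k j] ψ) φ) := by
  intro l
  induction l with
  | nil => simp
  | cons a t ih =>
    intro hmem hpw
    rcases List.mem_cons.1 hmem with h | h
    · subst h
      have hnot : i ∉ t := fun hmem' => lt_irrefl i ((List.pairwise_cons.1 hpw).1 i hmem')
      have ht : t.foldr (fun j ψ => (pderivI j)^[((k + Pi.single i 1 : Fin d → ℕ)) j] ψ) φ
          = t.foldr (fun j ψ => (pderivI j)^[k j] ψ) φ := by
        apply foldr_congr_mem
        intro b hb
        have hba : b ≠ i := fun hba => hnot (hba ▸ hb)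
        funext ψ
        simp [Pi.single_eq_of_ne hba]
      simp only [List.foldr_cons, ht]
      have h1 : ((k + Pi.single i 1 : Fin d → ℕ)) i = k i + 1 := by simp
      rw [h1, Function.iterate_succ_apply']
    · have hai : a < i := (List.pairwise_cons.1 hpw).1 i h
      have hka : k a = 0 := hk a hai
      have hka' : ((k + Pi.single i 1 : Fin d → ℕ)) a = 0 := by
        simp [hka, Pi.single_eq_of_ne (ne_of_lt hai)]
      simp only [List.foldr_cons, hka, hka', Function.iterate_zero_apply]
      exact ih h (List.pairwise_cons.1 hpw).2

lemma mderiv_succ (k : Fin d → ℕ) (i : Fin d) (φ : Euc d → ℂ)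
    (hk : ∀ j, j < i → k j = 0) :
    mderiv (k + Pi.single i 1) φ = pderivI i (mderiv k φ) :=
  foldr_struct_aux k i φ hk _ (List.mem_finRange i) (List.pairwise_lt_finRange d)

lemma sum_single_one (i : Fin d) : (∑ j, (Pi.single i 1 : Fin d → ℕ) j) = 1 := by
  simp

lemma decomp (k : Fin d → ℕ) (hk : 0 < ∑ j, k j) :
    ∃ (i : Fin d) (k' : Fin d → ℕ), k = k' + Pi.single i 1 ∧
      (∀ j, j < i → k' j = 0) ∧ (∑ j, k' j) + 1 = ∑ j, k j := by
  classical
  have hne : (Finset.univ.filter (fun j => k j ≠ 0)).Nonempty := by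
    by_contra hcon
    rw [Finset.not_nonempty_iff_eq_empty] at hcon
    have : ∀ j, k j = 0 := by
      intro j
      by_contra hj
      have : j ∈ Finset.univ.filter (fun j => k j ≠ 0) := by simp [hj]
      simp [hcon] at this
    simp [this] at hk
  set i := (Finset.univ.filter (fun j => k j ≠ 0)).min' hne with hi
  have hki : k i ≠ 0 := by
    have := (Finset.univ.filter (fun j => k j ≠ 0)).min'_mem hne
    simpa using this
  refine ⟨i, Function.update k i (k i - 1), ?_, ?_, ?_⟩
  · funext j
    by_cases hj : j = i
    · subst hj
      simp [Nat.sub_add_cancel (Nat.one_le_iff_ne_zero.2 hki)]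
    · simp [Function.update_of_ne hj, Pi.single_eq_of_ne hj]
  · intro j hj
    have hji : j ≠ i := ne_of_lt hj
    rw [Function.update_of_ne hji]
    by_contra hkj
    have hmem : j ∈ Finset.univ.filter (fun j => k j ≠ 0) := by simp [hkj]
    exact absurd (Finset.min'_le _ j hmem) (not_le.2 hj)
  · have h1 : k = Function.update k i (k i - 1) + Pi.single i 1 := by
      funext j
      by_cases hj : j = i
      · subst hj; simp [Nat.sub_add_cancel (Nat.one_le_iff_ne_zero.2 hki)]
      · simp [Function.update_of_ne hj, Pi.single_eq_of_ne hj]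
    conv_rhs => rw [h1]
    simp only [Pi.add_apply]
    rw [Finset.sum_add_distrib]
    simp

lemma mderiv_induction (P : (Fin d → ℕ) → Prop)
    (h0 : P (fun _ => 0))
    (hstep : ∀ k i, (∀ j, j < i → k j = 0) → P k → P (k + Pi.single i 1)) :
    ∀ k, P k := by
  suffices H : ∀ n k, (∑ j, k j) = n → P k by exact fun k => H _ k rfl
  intro n
  induction n with
  | zero =>
    intro k hk
    have : k = fun _ => 0 := by
      funext j
      exact Finset.sum_eq_zero_iff.1 hk j (Finset.mem_univ j)
    exact this ▸ h0
  | succ n ih =>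
    intro k hk
    obtain ⟨i, k', rfl, hz, hsum⟩ := decomp k (by omega)
    exact hstep k' i hz (ih k' (by omega))

end Aux


namespace Aux2
open Aux
variable {d : ℕ}

lemma contDiff_pderivI (i : Fin d) (φ : Euc d → ℂ) (hφ : ContDiff ℝ (⊤ : ℕ∞) φ) :
    ContDiff ℝ (⊤ : ℕ∞) (pderivI i φ) := by
  have h1 : ContDiff ℝ (⊤ : ℕ∞) (fderiv ℝ φ) := hφ.fderiv_right (by simp)
  exact h1.clm_apply contDiff_const

lemma contDiff_mderiv (k : Fin d → ℕ) (φ : Euc d → ℂ) (hφ : ContDiff ℝ (⊤ : ℕ∞) φ) :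
    ContDiff ℝ (⊤ : ℕ∞) (mderiv k φ) := by
  induction k using mderiv_induction with
  | h0 => rwa [mderiv_zero]
  | hstep k i hz ih => rw [mderiv_succ k i φ hz]; exact contDiff_pderivI i _ ih

lemma pderivI_add (i : Fin d) (φ ψ : Euc d → ℂ) (hφ : ContDiff ℝ (⊤ : ℕ∞) φ)
    (hψ : ContDiff ℝ (⊤ : ℕ∞) ψ) :
    pderivI i (fun x => φ x + ψ x) = fun x => pderivI i φ x + pderivI i ψ x := by
  funext x
  unfold pderivI
  rw [fderiv_fun_add ((hφ.differentiable (by simp)) x) ((hψ.differentiable (by simp)) x)]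
  simp

lemma pderivI_sub (i : Fin d) (φ ψ : Euc d → ℂ) (hφ : ContDiff ℝ (⊤ : ℕ∞) φ)
    (hψ : ContDiff ℝ (⊤ : ℕ∞) ψ) :
    pderivI i (fun x => φ x - ψ x) = fun x => pderivI i φ x - pderivI i ψ x := by
  funext x
  unfold pderivI
  rw [fderiv_fun_sub ((hφ.differentiable (by simp)) x) ((hψ.differentiable (by simp)) x)]
  simp

lemma mderiv_add (k : Fin d → ℕ) (φ ψ : Euc d → ℂ) (hφ : ContDiff ℝ (⊤ : ℕ∞) φ)
    (hψ : ContDiff ℝ (⊤ : ℕ∞) ψ) :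
    mderiv k (fun x => φ x + ψ x) = fun x => mderiv k φ x + mderiv k ψ x := by
  induction k using mderiv_induction with
  | h0 => rw [mderiv_zero, mderiv_zero, mderiv_zero]
  | hstep k i hz ih =>
    rw [mderiv_succ _ i _ hz, mderiv_succ _ i _ hz, mderiv_succ _ i _ hz, ih]
    exact pderivI_add i _ _ (contDiff_mderiv k φ hφ) (contDiff_mderiv k ψ hψ)

lemma mderiv_sub (k : Fin d → ℕ) (φ ψ : Euc d → ℂ) (hφ : ContDiff ℝ (⊤ : ℕ∞) φ)
    (hψ : ContDiff ℝ (⊤ : ℕ∞) ψ) :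
    mderiv k (fun x => φ x - ψ x) = fun x => mderiv k φ x - mderiv k ψ x := by
  induction k using mderiv_induction with
  | h0 => rw [mderiv_zero, mderiv_zero, mderiv_zero]
  | hstep k i hz ih =>
    rw [mderiv_succ _ i _ hz, mderiv_succ _ i _ hz, mderiv_succ _ i _ hz, ih]
    exact pderivI_sub i _ _ (contDiff_mderiv k φ hφ) (contDiff_mderiv k ψ hψ)

lemma pderivI_zero (i : Fin d) : pderivI i (fun _ : Euc d => (0 : ℂ)) = fun _ => 0 := by
  funext x
  unfold pderivI
  rw [fderiv_fun_const]
  simp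

lemma mderiv_zero_fun (k : Fin d → ℕ) :
    mderiv k (fun _ : Euc d => (0 : ℂ)) = fun _ => 0 := by
  induction k using mderiv_induction with
  | h0 => rw [mderiv_zero]
  | hstep k i hz ih => rw [mderiv_succ _ i _ hz, ih, pderivI_zero]

lemma pderivI_eqOn {U : Set (Euc d)} (hU : IsOpen U) (i : Fin d) (φ ψ : Euc d → ℂ)
    (h : Set.EqOn φ ψ U) : Set.EqOn (pderivI i φ) (pderivI i ψ) U := by
  intro x hx
  unfold pderivI
  rw [Filter.EventuallyEq.fderiv_eq (Filter.eventuallyEq_of_mem (hU.mem_nhds hx) h)]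

lemma mderiv_eqOn {U : Set (Euc d)} (hU : IsOpen U) (k : Fin d → ℕ) (φ ψ : Euc d → ℂ)
    (h : Set.EqOn φ ψ U) : Set.EqOn (mderiv k φ) (mderiv k ψ) U := by
  induction k using mderiv_induction with
  | h0 => rw [mderiv_zero, mderiv_zero]; exact h
  | hstep k i hz ih =>
    rw [mderiv_succ _ i _ hz, mderiv_succ _ i _ hz]
    exact pderivI_eqOn hU i _ _ ih

lemma mderiv_eq_zero_of_eqOn_zero {U : Set (Euc d)} (hU : IsOpen U) (k : Fin d → ℕ)
    (φ : Euc d → ℂ) (h : Set.EqOn φ (fun _ => 0) U) : ∀ x ∈ U, mderiv k φ x = 0 := by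
  intro x hx
  have := mderiv_eqOn hU k φ (fun _ => 0) h hx
  rwa [mderiv_zero_fun] at this

lemma pderivI_const_smul (i : Fin d) (a : ℝ) (φ : Euc d → ℂ) (hφ : ContDiff ℝ (⊤ : ℕ∞) φ) :
    pderivI i (fun x => a • φ x) = fun x => a • pderivI i φ x := by
  funext x
  unfold pderivI
  rw [fderiv_fun_const_smul ((hφ.differentiable (by simp)) x) a]
  simp

/-- Chain rule for scaling. -/
lemma pderivI_comp_smul (i : Fin d) (c : ℝ) (φ : Euc d → ℂ) (hφ : ContDiff ℝ (⊤ : ℕ∞) φ) :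
    pderivI i (fun x => φ (c • x)) = fun x => c • pderivI i φ (c • x) := by
  funext x
  unfold pderivI
  have hA : (fun x : Euc d => φ (c • x)) = φ ∘ (fun x : Euc d => c • x) := rfl
  have hd1 : DifferentiableAt ℝ φ (c • x) := (hφ.differentiable (by simp)) _
  have hd2 : DifferentiableAt ℝ (fun x : Euc d => c • x) x :=
    (differentiable_id.const_smul c).differentiableAt
  rw [hA, fderiv_comp x hd1 hd2]
  have h2 : fderiv ℝ (fun x : Euc d => c • x) x = c • ContinuousLinearMap.id ℝ (Euc d) := by
    have : (fun x : Euc d => c • x) = fun x => (c • ContinuousLinearMap.id ℝ (Euc d)) x := by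
      funext y; simp
    rw [this]
    exact (c • ContinuousLinearMap.id ℝ (Euc d)).fderiv
  rw [h2]
  simp [(fderiv ℝ φ (c • x)).map_smul]

lemma contDiff_comp_smul (c : ℝ) (φ : Euc d → ℂ) (hφ : ContDiff ℝ (⊤ : ℕ∞) φ) :
    ContDiff ℝ (⊤ : ℕ∞) (fun x : Euc d => φ (c • x)) :=
  hφ.comp (contDiff_id.const_smul c)

lemma mderiv_comp_smul (k : Fin d → ℕ) (c : ℝ) (φ : Euc d → ℂ) (hφ : ContDiff ℝ (⊤ : ℕ∞) φ) :
    mderiv k (fun x => φ (c • x)) = fun x => (c ^ (∑ j, k j)) • mderiv k φ (c • x) := by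
  induction k using mderiv_induction with
  | h0 =>
    rw [mderiv_zero]
    funext x
    rw [mderiv_zero]
    simp
  | hstep k i hz ih =>
    rw [mderiv_succ _ i _ hz, ih]
    have hsm : ContDiff ℝ (⊤ : ℕ∞) (fun x => mderiv k φ (c • x)) :=
      contDiff_comp_smul c _ (contDiff_mderiv k φ hφ)
    rw [pderivI_const_smul i _ _ hsm, pderivI_comp_smul i c _ (contDiff_mderiv k φ hφ)]
    rw [← mderiv_succ k i φ hz]
    funext x
    have hsum : (∑ j, ((k + Pi.single i 1 : Fin d → ℕ)) j) = (∑ j, k j) + 1 := by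
      simp only [Pi.add_apply]
      rw [Finset.sum_add_distrib]
      simp
    rw [hsum, smul_smul, pow_succ]

end Aux2


namespace Aux3
open Aux Aux2
variable {d : ℕ}

lemma contDiff_msum {ι : Type*} (s : Multiset ι) (t : ι → Euc d → ℂ)
    (ht : ∀ j ∈ s, ContDiff ℝ (⊤ : ℕ∞) (t j)) :
    ContDiff ℝ (⊤ : ℕ∞) (fun x => (s.map (fun j => t j x)).sum) := by
  induction s using Multiset.induction_on with
  | empty => simpa using contDiff_const
  | cons a s ih =>
    simp only [Multiset.map_cons, Multiset.sum_cons]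
    exact (ht a (Multiset.mem_cons_self a s)).add
      (ih (fun j hj => ht j (Multiset.mem_cons_of_mem hj)))

lemma pderivI_msum {ι : Type*} (i : Fin d) (s : Multiset ι) (t : ι → Euc d → ℂ)
    (ht : ∀ j ∈ s, ContDiff ℝ (⊤ : ℕ∞) (t j)) :
    pderivI i (fun x => (s.map (fun j => t j x)).sum)
      = fun x => (s.map (fun j => pderivI i (t j) x)).sum := by
  induction s using Multiset.induction_on with
  | empty => simpa using pderivI_zero i
  | cons a s ih =>
    simp only [Multiset.map_cons, Multiset.sum_cons]
    have h1 := pderivI_add i (t a) (fun x => (s.map (fun j => t j x)).sum)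
      (ht a (Multiset.mem_cons_self a s))
      (contDiff_msum s t (fun j hj => ht j (Multiset.mem_cons_of_mem hj)))
    rw [h1, ih (fun j hj => ht j (Multiset.mem_cons_of_mem hj))]

lemma pderivI_mul (i : Fin d) (f g : Euc d → ℂ) (hf : ContDiff ℝ (⊤ : ℕ∞) f)
    (hg : ContDiff ℝ (⊤ : ℕ∞) g) :
    pderivI i (fun x => f x * g x)
      = fun x => pderivI i f x * g x + f x * pderivI i g x := by
  funext x
  unfold pderivI
  rw [fderiv_fun_mul ((hf.differentiable (by simp)) x) ((hg.differentiable (by simp)) x)]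
  simp [smul_eq_mul]
  ring

lemma sub_succ_pointwise (k j : Fin d → ℕ) (i : Fin d) (hj : j ≤ k) :
    ((k + Pi.single i 1 : Fin d → ℕ)) - (j + Pi.single i 1) = k - j := by
  funext a
  by_cases ha : a = i
  · subst ha; simp [Nat.succ_sub_succ]
  · simp [Pi.single_eq_of_ne ha]

lemma sub_succ_pointwise' (k j : Fin d → ℕ) (i : Fin d) (hj : j ≤ k) :
    ((k + Pi.single i 1 : Fin d → ℕ)) - j = (k - j) + Pi.single i 1 := by
  funext a
  have hja : j a ≤ k a := hj a
  by_cases ha : a = i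
  · subst ha
    simp only [Pi.add_apply, Pi.sub_apply, Pi.single_eq_same]
    omega
  · simp only [Pi.add_apply, Pi.sub_apply, Pi.single_eq_of_ne ha]
    omega

lemma leibniz_rep (F G : Euc d → ℂ) (hF : ContDiff ℝ (⊤ : ℕ∞) F) (hG : ContDiff ℝ (⊤ : ℕ∞) G) :
    ∀ k : Fin d → ℕ, ∃ s : Multiset (Fin d → ℕ),
      (∀ j ∈ s, j ≤ k) ∧ Multiset.card s = 2 ^ (∑ i, k i) ∧
      ∀ x, mderiv k (fun y => F y * G y) x
          = (s.map (fun j => mderiv j F x * mderiv (k - j) G x)).sum := by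
  intro k
  induction k using mderiv_induction with
  | h0 =>
    refine ⟨{fun _ => 0}, ?_, by simp, ?_⟩
    · intro j hj; rw [Multiset.mem_singleton] at hj; subst hj; exact le_refl _
    · intro x
      have h0 : ((fun _ => 0 : Fin d → ℕ) - (fun _ => 0)) = (fun _ => 0 : Fin d → ℕ) := by
        funext; simp
      simp only [Multiset.map_singleton, Multiset.sum_singleton, h0, mderiv_zero]
  | hstep k i hz ih =>
    obtain ⟨s, hmem, hcard, hrep⟩ := ih
    refine ⟨s.map (· + Pi.single i 1) + s, ?_, ?_, ?_⟩
    · intro j hj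
      rcases Multiset.mem_add.1 hj with hj | hj
      · obtain ⟨j', hj', rfl⟩ := Multiset.mem_map.1 hj
        exact add_le_add_left (hmem j' hj') _
      · exact le_trans (hmem j hj) (by intro a; simp)
    · rw [Multiset.card_add, Multiset.card_map, hcard]
      have : (∑ a, ((k + Pi.single i 1 : Fin d → ℕ)) a) = (∑ a, k a) + 1 := by
        simp only [Pi.add_apply]; rw [Finset.sum_add_distrib]; simp
      rw [this, pow_succ]
      ring
    · intro x
      have hFG : ContDiff ℝ (⊤ : ℕ∞) (fun y => F y * G y) := hF.mul hG
      rw [mderiv_succ _ i _ hz]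
      have hfun : mderiv k (fun y => F y * G y)
          = fun x => (s.map (fun j => mderiv j F x * mderiv (k - j) G x)).sum :=
        funext hrep
      rw [hfun]
      have hsm : ∀ j ∈ s, ContDiff ℝ (⊤ : ℕ∞) (fun x => mderiv j F x * mderiv (k - j) G x) :=
        fun j _ => (contDiff_mderiv j F hF).mul (contDiff_mderiv (k - j) G hG)
      rw [pderivI_msum i s _ hsm]
      have hterm : ∀ j ∈ s, pderivI i (fun x => mderiv j F x * mderiv (k - j) G x) x
          = mderiv (j + Pi.single i 1) F x * mderiv (k - j) G x
            + mderiv j F x * mderiv ((k - j) + Pi.single i 1) G x := by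
        intro j hj
        have hzj : ∀ a, a < i → j a = 0 := fun a ha => by
          have h1 : j a ≤ k a := hmem j hj a
          have h2 := hz a ha
          omega
        have hzkj : ∀ a, a < i → (k - j) a = 0 := fun a ha => by
          simp [hz a ha, hzj a ha]
        rw [pderivI_mul i _ _ (contDiff_mderiv j F hF) (contDiff_mderiv (k - j) G hG)]
        rw [← mderiv_succ j i F hzj, ← mderiv_succ (k - j) i G hzkj]
      -- now rewrite the sum
      dsimp only
      rw [Multiset.map_congr rfl hterm, Multiset.sum_map_add]
      rw [Multiset.map_add, Multiset.sum_add, Multiset.map_map]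
      congr 1
      · apply congrArg Multiset.sum
        apply Multiset.map_congr rfl
        intro j hj
        simp only [Function.comp_apply]
        rw [sub_succ_pointwise k j i (hmem j hj)]
      · apply congrArg Multiset.sum
        apply Multiset.map_congr rfl
        intro j hj
        rw [sub_succ_pointwise' k j i (hmem j hj)]

end Aux3


namespace Aux4
open Aux Aux2 Aux3
variable {d : ℕ}

lemma sum_sub_add (k j : Fin d → ℕ) (hj : j ≤ k) :
    (∑ i, j i) + (∑ i, (k - j) i) = ∑ i, k i := by
  rw [← Finset.sum_add_distrib]
  apply Finset.sum_congr rfl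
  intro a _
  have hja : j a ≤ k a := hj a
  simp only [Pi.sub_apply]
  omega

lemma leibniz_bound (F G : Euc d → ℂ) (hF : ContDiff ℝ (⊤ : ℕ∞) F) (hG : ContDiff ℝ (⊤ : ℕ∞) G)
    (k : Fin d → ℕ) (x : Euc d) (S V : ℕ → ℝ) (W : ℝ)
    (hS : ∀ n, 0 ≤ S n)
    (hSx : ∀ j, j ≤ k → ‖mderiv j F x‖ ≤ S (∑ i, j i))
    (hVx : ∀ j, j ≤ k → ‖mderiv j G x‖ ≤ V (∑ i, j i))
    (hW : ∀ a b, a + b = ∑ i, k i → S a * V b ≤ W) :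
    ‖mderiv k (fun y => F y * G y) x‖ ≤ 2 ^ (∑ i, k i) * W := by
  obtain ⟨s, hmem, hcard, hrep⟩ := leibniz_rep F G hF hG k
  rw [hrep x]
  calc ‖(s.map (fun j => mderiv j F x * mderiv (k - j) G x)).sum‖
      ≤ ((s.map (fun j => mderiv j F x * mderiv (k - j) G x)).map norm).sum :=
        norm_multiset_sum_le _
    _ ≤ W * 2 ^ (∑ i, k i) := by
        rw [Multiset.map_map]
        have hbd : ∀ y ∈ s.map (norm ∘ fun j => mderiv j F x * mderiv (k - j) G x), y ≤ W := by
          intro y hy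
          obtain ⟨j, hj, rfl⟩ := Multiset.mem_map.1 hy
          simp only [Function.comp_apply, norm_mul]
          have h1 := hSx j (hmem j hj)
          have h2 := hVx (k - j) (by intro a; simp only [Pi.sub_apply]; omega)
          calc ‖mderiv j F x‖ * ‖mderiv (k - j) G x‖
              ≤ S (∑ i, j i) * V (∑ i, (k - j) i) :=
                mul_le_mul h1 h2 (norm_nonneg _) (hS _)
            _ ≤ W := hW _ _ (sum_sub_add k j (hmem j hj))
        have := Multiset.sum_le_card_nsmul _ W hbd
        rw [Multiset.card_map, hcard] at this
        simpa [nsmul_eq_mul, mul_comm] using this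
    _ = 2 ^ (∑ i, k i) * W := by ring

/-- log-convexity consequence : `M p * M q ≤ M (p+q)` -/
lemma M_mul_le (M : ℕ → ℝ) (hMpos : ∀ p, 0 < M p) (hM0 : M 0 = 1)
    (hM1 : ∀ p : ℕ, M (p + 1) ^ 2 ≤ M p * M (p + 2)) :
    ∀ p q, M p * M q ≤ M (p + q) := by
  have hmono : Monotone (fun p => M (p + 1) / M p) := by
    apply monotone_nat_of_le_succ
    intro p
    rw [div_le_div_iff₀ (hMpos p) (hMpos (p + 1))]
    have := hM1 p
    nlinarith [hMpos (p+1), hMpos p]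
  intro p
  induction p with
  | zero => intro q; simp [hM0]
  | succ p ih =>
    intro q
    have h1 : M p * M q ≤ M (p + q) := ih q
    have h2 : M (p + 1) / M p ≤ M (p + q + 1) / M (p + q) := hmono (by omega)
    rw [div_le_div_iff₀ (hMpos p) (hMpos (p + q))] at h2
    -- M(p+1) * M(p+q) ≤ M(p+q+1) * M p
    have h3 : M (p + 1) * M q * M p ≤ M (p + q + 1) * M p := by
      calc M (p + 1) * M q * M p = (M p * M q) * M (p + 1) := by ring
        _ ≤ M (p + q) * M (p + 1) :=
            mul_le_mul_of_nonneg_right h1 (le_of_lt (hMpos _))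
        _ = M (p + 1) * M (p + q) := by ring
        _ ≤ M (p + q + 1) * M p := h2
    have := le_of_mul_le_mul_right (by linarith [h3] :
      (M (p + 1) * M q) * M p ≤ M (p + q + 1) * M p) (hMpos p)
    calc M (p + 1) * M q ≤ M (p + q + 1) := this
      _ = M (p + 1 + q) := by ring_nf
  
lemma prodle (ρ σ : ℕ → ℝ) (c : ℝ) (N : ℕ) (hc : 1 ≤ c)
    (hρ0 : ∀ i, 0 ≤ ρ i) (hσ : ∀ i, 0 < σ i)
    (h1 : ∀ i, ρ i ≤ c * σ i) (h2 : ∀ i, N ≤ i → ρ i ≤ σ i) :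
    ∀ p, ∏ i ∈ Finset.range (p + 1), ρ i ≤ c ^ N * ∏ i ∈ Finset.range (p + 1), σ i := by
  have key : ∀ p, ∏ i ∈ Finset.range (p + 1), ρ i
      ≤ c ^ (min (p + 1) N) * ∏ i ∈ Finset.range (p + 1), σ i := by
    intro p
    induction p with
    | zero =>
      simp only [zero_add, Finset.prod_range_one]
      rcases Nat.eq_zero_or_pos N with hN | hN
      · have hm : min 1 N = 0 := by omega
        rw [hm, pow_zero, one_mul]
        exact h2 0 (by omega)
      · have hm : min 1 N = 1 := by omega
        rw [hm, pow_one]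
        exact h1 0
    | succ p ih =>
      rw [Finset.prod_range_succ ρ (p + 1), Finset.prod_range_succ σ (p + 1)]
      by_cases hpN : p + 1 < N
      · have hmin1 : min (p + 1) N = p + 1 := by omega
        have hmin2 : min (p + 2) N = p + 2 := by omega
        rw [hmin1] at ih
        rw [hmin2]
        calc (∏ i ∈ Finset.range (p + 1), ρ i) * ρ (p + 1)
            ≤ (c ^ (p + 1) * ∏ i ∈ Finset.range (p + 1), σ i) * (c * σ (p + 1)) := by
              apply mul_le_mul ih (h1 _) (hρ0 _)
              exact mul_nonneg (pow_nonneg (le_trans zero_le_one hc) _)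
                (le_of_lt (Finset.prod_pos fun i _ => hσ i))
          _ = c ^ (p + 2) * ((∏ i ∈ Finset.range (p + 1), σ i) * σ (p + 1)) := by ring
      · have hge : N ≤ p + 1 := by omega
        have hmin1 : min (p + 1) N = N := by omega
        have hmin2 : min (p + 2) N = N := by omega
        rw [hmin1] at ih
        rw [hmin2]
        calc (∏ i ∈ Finset.range (p + 1), ρ i) * ρ (p + 1)
            ≤ (c ^ N * ∏ i ∈ Finset.range (p + 1), σ i) * σ (p + 1) := by
              apply mul_le_mul ih (h2 _ hge) (hρ0 _)
              exact mul_nonneg (pow_nonneg (le_trans zero_le_one hc) _)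
                (le_of_lt (Finset.prod_pos fun i _ => hσ i))
          _ = c ^ N * ((∏ i ∈ Finset.range (p + 1), σ i) * σ (p + 1)) := by ring
  intro p
  calc ∏ i ∈ Finset.range (p + 1), ρ i
      ≤ c ^ (min (p + 1) N) * ∏ i ∈ Finset.range (p + 1), σ i := key p
    _ ≤ c ^ N * ∏ i ∈ Finset.range (p + 1), σ i := by
      apply mul_le_mul_of_nonneg_right (pow_le_pow_right₀ hc (by omega))
      apply le_of_lt
      exact Finset.prod_pos fun i _ => hσ i

end Aux4


namespace Aux5
open Aux Aux2 Aux3 Aux4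
variable {d : ℕ}

lemma rclass_one_le {r : ℕ → ℝ} (hr : RClass r) (i : ℕ) : 1 ≤ r i :=
  hr.1 ▸ hr.2.1 (Nat.zero_le i)

lemma rclass_rpos {r : ℕ → ℝ} (hr : RClass r) (i : ℕ) : 0 < r i :=
  lt_of_lt_of_le zero_lt_one (rclass_one_le hr i)

lemma prodSeq_pos {r : ℕ → ℝ} (hr : RClass r) (p : ℕ) : 0 < prodSeq r p :=
  Finset.prod_pos fun i _ => rclass_rpos hr i

lemma one_le_prodSeq {r : ℕ → ℝ} (hr : RClass r) (p : ℕ) : 1 ≤ prodSeq r p := by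
  unfold prodSeq
  induction p with
  | zero => simpa using rclass_one_le hr 0
  | succ p ih =>
    rw [Finset.prod_range_succ]
    nlinarith [rclass_one_le hr (p + 1)]

lemma prodSeq_mono {r : ℕ → ℝ} (hr : RClass r) : Monotone (prodSeq r) := by
  apply monotone_nat_of_le_succ
  intro p
  have h1 : prodSeq r (p + 1) = prodSeq r p * r (p + 1) := by
    unfold prodSeq
    rw [Finset.prod_range_succ]
  rw [h1]
  exact le_mul_of_one_le_right (le_of_lt (prodSeq_pos hr p)) (rclass_one_le hr (p + 1))

lemma le_hnorm (M : ℕ → ℝ) (h : ℝ) (φ : Euc d → ℂ) (k : Fin d → ℕ) (x : Euc d) :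
    ENNReal.ofReal (‖mderiv k φ x‖ / (h ^ (∑ i, k i) * M (∑ i, k i))) ≤ hnorm M h φ :=
  le_iSup_of_le k (le_iSup_of_le x (le_refl _))

lemma hnorm_bound {M : ℕ → ℝ} {h : ℝ} {φ : Euc d → ℂ} (hh : 0 < h) (hM : ∀ p, 0 < M p)
    (hfin : hnorm M h φ ≠ ⊤) (k : Fin d → ℕ) (x : Euc d) :
    ‖mderiv k φ x‖ ≤ (hnorm M h φ).toReal * (h ^ (∑ i, k i) * M (∑ i, k i)) := by
  have h1 := le_hnorm M h φ k x
  have hpos : 0 < h ^ (∑ i, k i) * M (∑ i, k i) := by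
    have := hM (∑ i, k i); positivity
  have h2 : ‖mderiv k φ x‖ / (h ^ (∑ i, k i) * M (∑ i, k i)) ≤ (hnorm M h φ).toReal := by
    have := (ENNReal.ofReal_le_iff_le_toReal hfin).1 h1
    exact this
  rw [div_le_iff₀ hpos] at h2
  linarith [h2]

lemma hnorm_le {M : ℕ → ℝ} {h : ℝ} {φ : Euc d → ℂ} {C : ℝ} (hh : 0 < h)
    (hM : ∀ p, 0 < M p)
    (hb : ∀ (k : Fin d → ℕ) (x : Euc d),
      ‖mderiv k φ x‖ ≤ C * (h ^ (∑ i, k i) * M (∑ i, k i))) :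
    hnorm M h φ ≤ ENNReal.ofReal C := by
  refine iSup_le fun k => iSup_le fun x => ?_
  apply ENNReal.ofReal_le_ofReal
  rw [div_le_iff₀ (by have := hM (∑ i, k i); positivity)]
  exact hb k x

lemma le_rnorm (M : ℕ → ℝ) (r : ℕ → ℝ) (φ : Euc d → ℂ) (k : Fin d → ℕ) (x : Euc d) :
    ENNReal.ofReal (‖mderiv k φ x‖ / (prodSeq r (∑ i, k i) * M (∑ i, k i))) ≤ rnorm M r φ :=
  le_iSup_of_le k (le_iSup_of_le x (le_refl _))

lemma rnorm_bound {M : ℕ → ℝ} {r : ℕ → ℝ} {φ : Euc d → ℂ} (hr : RClass r)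
    (hM : ∀ p, 0 < M p) {B : ℝ≥0∞} (hBfin : B ≠ ⊤) (hle : rnorm M r φ ≤ B)
    (k : Fin d → ℕ) (x : Euc d) :
    ‖mderiv k φ x‖ ≤ B.toReal * (prodSeq r (∑ i, k i) * M (∑ i, k i)) := by
  have h1 := le_trans (le_rnorm M r φ k x) hle
  have hpos : 0 < prodSeq r (∑ i, k i) * M (∑ i, k i) := by
    have := hM (∑ i, k i); have := prodSeq_pos hr (∑ i, k i); positivity
  have h2 := (ENNReal.ofReal_le_iff_le_toReal hBfin).1 h1
  rw [div_le_iff₀ hpos] at h2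
  linarith [h2]

lemma rnorm_le {M : ℕ → ℝ} {r : ℕ → ℝ} {φ : Euc d → ℂ} {C : ℝ} (hr : RClass r)
    (hM : ∀ p, 0 < M p)
    (hb : ∀ (k : Fin d → ℕ) (x : Euc d),
      ‖mderiv k φ x‖ ≤ C * (prodSeq r (∑ i, k i) * M (∑ i, k i))) :
    rnorm M r φ ≤ ENNReal.ofReal C := by
  refine iSup_le fun k => iSup_le fun x => ?_
  apply ENNReal.ofReal_le_ofReal
  rw [div_le_iff₀ (by have := hM (∑ i, k i); have := prodSeq_pos hr (∑ i, k i); positivity)]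
  exact hb k x

lemma qnormK_bound {M : ℕ → ℝ} {K : Set (Euc d)} {h : ℝ} {φ : Euc d → ℂ}
    (hh : 0 < h) (hM : ∀ p, 0 < M p) {δ : ℝ} (hδ : 0 ≤ δ)
    (hle : qnormK M K h φ ≤ ENNReal.ofReal δ)
    (k : Fin d → ℕ) (x : Euc d) (hx : x ∈ K) :
    ‖mderiv k φ x‖ ≤ δ * (h ^ (∑ i, k i) * M (∑ i, k i)) := by
  have h0 := le_iSup (fun y : ↥K => ENNReal.ofReal
      (‖mderiv k φ (y : Euc d)‖ / (h ^ (∑ i, k i) * M (∑ i, k i)))) (⟨x, hx⟩ : ↥K)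
  have h1 : ENNReal.ofReal (‖mderiv k φ x‖ / (h ^ (∑ i, k i) * M (∑ i, k i)))
      ≤ ENNReal.ofReal δ :=
    le_trans (le_iSup_of_le k h0) hle
  have hpos : 0 < h ^ (∑ i, k i) * M (∑ i, k i) := by
    have := hM (∑ i, k i); positivity
  rw [ENNReal.ofReal_le_ofReal_iff hδ, div_le_iff₀ hpos] at h1
  linarith [h1]

end Aux5



namespace Aux6
open Aux Aux2 Aux3 Aux4 Aux5
variable {d : ℕ}

lemma hnorm_lt_top {M : ℕ → ℝ} {h : ℝ} {φ : Euc d → ℂ} {C : ℝ}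
    (hle : hnorm M h φ ≤ ENNReal.ofReal C) : hnorm M h φ < ⊤ :=
  lt_of_le_of_lt hle ENNReal.ofReal_lt_top

lemma isDMp_bound {M : ℕ → ℝ} (hM : ∀ p, 0 < M p) {φ : Euc d → ℂ} (hφ : IsDMp M φ) :
    ∃ h, 1 ≤ h ∧ ∃ C, 0 ≤ C ∧ ∀ (k : Fin d → ℕ) (x : Euc d),
      ‖mderiv k φ x‖ ≤ C * (h ^ (∑ i, k i) * M (∑ i, k i)) := by
  obtain ⟨hsm, hcs, h, hh, hfin⟩ := hφ
  refine ⟨max h 1, le_max_right _ _, (hnorm M h φ).toReal, ENNReal.toReal_nonneg, ?_⟩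
  intro k x
  calc ‖mderiv k φ x‖
      ≤ (hnorm M h φ).toReal * (h ^ (∑ i, k i) * M (∑ i, k i)) :=
        hnorm_bound hh hM hfin.ne k x
    _ ≤ (hnorm M h φ).toReal * ((max h 1) ^ (∑ i, k i) * M (∑ i, k i)) := by
        apply mul_le_mul_of_nonneg_left _ ENNReal.toReal_nonneg
        apply mul_le_mul_of_nonneg_right _ (le_of_lt (hM _))
        exact pow_le_pow_left₀ (le_of_lt hh) (le_max_left _ _) _

lemma isDMp_sub {M : ℕ → ℝ} (hM : ∀ p, 0 < M p) {φ ψ : Euc d → ℂ}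
    (hφ : IsDMp M φ) (hψ : IsDMp M ψ) : IsDMp M (fun x => φ x - ψ x) := by
  obtain ⟨h₁, hh₁, C₁, hC₁, hb₁⟩ := isDMp_bound hM hφ
  obtain ⟨h₂, hh₂, C₂, hC₂, hb₂⟩ := isDMp_bound hM hψ
  refine ⟨hφ.1.sub hψ.1, ?_, max h₁ h₂, by positivity, ?_⟩
  · have h1 := hφ.2.1
    have h2 := hψ.2.1
    rw [hasCompactSupport_iff_eventuallyEq] at h1 h2 ⊢
    filter_upwards [h1, h2] with x hx1 hx2
    simp only [Pi.zero_apply] at hx1 hx2 ⊢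
    simp [hx1, hx2]
  · apply hnorm_lt_top (C := C₁ + C₂)
    apply hnorm_le (by positivity) hM
    intro k x
    rw [mderiv_sub k φ ψ hφ.1 hψ.1]
    have e1 : h₁ ^ (∑ i, k i) ≤ (max h₁ h₂) ^ (∑ i, k i) :=
      pow_le_pow_left₀ (by linarith) (le_max_left _ _) _
    have e2 : h₂ ^ (∑ i, k i) ≤ (max h₁ h₂) ^ (∑ i, k i) :=
      pow_le_pow_left₀ (by linarith) (le_max_right _ _) _
    have hMk := le_of_lt (hM (∑ i, k i))
    calc ‖mderiv k φ x - mderiv k ψ x‖ ≤ ‖mderiv k φ x‖ + ‖mderiv k ψ x‖ := norm_sub_le _ _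
      _ ≤ C₁ * (h₁ ^ (∑ i, k i) * M (∑ i, k i)) + C₂ * (h₂ ^ (∑ i, k i) * M (∑ i, k i)) :=
          add_le_add (hb₁ k x) (hb₂ k x)
      _ ≤ (C₁ + C₂) * ((max h₁ h₂) ^ (∑ i, k i) * M (∑ i, k i)) := by
          nlinarith [mul_le_mul_of_nonneg_right e1 hMk, mul_le_mul_of_nonneg_right e2 hMk,
            mul_le_mul_of_nonneg_left (mul_le_mul_of_nonneg_right e1 hMk) hC₁,
            mul_le_mul_of_nonneg_left (mul_le_mul_of_nonneg_right e2 hMk) hC₂]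

lemma isDMp_mul {M : ℕ → ℝ} (hM : ∀ p, 0 < M p) (hM0 : M 0 = 1) (hM1 : CondM1 M)
    {φ ψ : Euc d → ℂ} (hφ : IsDMp M φ) (hψ : IsDMp M ψ) :
    IsDMp M (fun x => φ x * ψ x) := by
  obtain ⟨h₁, hh₁, C₁, hC₁, hb₁⟩ := isDMp_bound hM hφ
  obtain ⟨h₂, hh₂, C₂, hC₂, hb₂⟩ := isDMp_bound hM hψ
  set h := max h₁ h₂ with hh_def
  have hh : 1 ≤ h := le_trans hh₁ (le_max_left _ _)
  refine ⟨hφ.1.mul hψ.1, ?_, 2 * h, by linarith, ?_⟩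
  · have : HasCompactSupport (φ * ψ) := hφ.2.1.mul_right
    exact this
  · apply hnorm_lt_top (C := C₁ * C₂)
    apply hnorm_le (by linarith) hM
    intro k x
    have hWb : ∀ a b : ℕ, a + b = ∑ i, k i →
        (C₁ * (h₁ ^ a * M a)) * (C₂ * (h₂ ^ b * M b))
          ≤ C₁ * C₂ * (h ^ (∑ i, k i) * M (∑ i, k i)) := by
      intro a b hab
      have e1 : h₁ ^ a ≤ h ^ a := pow_le_pow_left₀ (by linarith) (le_max_left _ _) _
      have e2 : h₂ ^ b ≤ h ^ b := pow_le_pow_left₀ (by linarith) (le_max_right _ _) _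
      have e3 : h ^ a * h ^ b = h ^ (∑ i, k i) := by rw [← pow_add, hab]
      have e4 : M a * M b ≤ M (a + b) := M_mul_le M hM hM0 hM1 a b
      have h0a : (0:ℝ) ≤ h₁ ^ a := by positivity
      have h0b : (0:ℝ) ≤ h₂ ^ b := by positivity
      have h0ha : (0:ℝ) ≤ h ^ a := by positivity
      have h0hb : (0:ℝ) ≤ h ^ b := by positivity
      have hMa := le_of_lt (hM a); have hMb := le_of_lt (hM b)
      calc (C₁ * (h₁ ^ a * M a)) * (C₂ * (h₂ ^ b * M b))
          = (C₁ * C₂) * ((h₁ ^ a * h₂ ^ b) * (M a * M b)) := by ring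
        _ ≤ (C₁ * C₂) * ((h ^ a * h ^ b) * (M a * M b)) := by
            apply mul_le_mul_of_nonneg_left _ (by positivity)
            apply mul_le_mul_of_nonneg_right _ (by positivity)
            exact mul_le_mul e1 e2 h0b h0ha
        _ ≤ (C₁ * C₂) * ((h ^ a * h ^ b) * M (a + b)) := by
            apply mul_le_mul_of_nonneg_left _ (by positivity)
            apply mul_le_mul_of_nonneg_left e4 (by positivity)
        _ = C₁ * C₂ * (h ^ (∑ i, k i) * M (∑ i, k i)) := by rw [e3, hab]
    have := leibniz_bound φ ψ hφ.1 hψ.1 k x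
      (fun a => C₁ * (h₁ ^ a * M a)) (fun b => C₂ * (h₂ ^ b * M b))
      (C₁ * C₂ * (h ^ (∑ i, k i) * M (∑ i, k i)))
      (fun a => by have := le_of_lt (hM a); positivity)
      (fun j _ => hb₁ j x) (fun j _ => hb₂ j x) hWb
    calc ‖mderiv k (fun y => φ y * ψ y) x‖
        ≤ 2 ^ (∑ i, k i) * (C₁ * C₂ * (h ^ (∑ i, k i) * M (∑ i, k i))) := this
      _ = C₁ * C₂ * ((2 * h) ^ (∑ i, k i) * M (∑ i, k i)) := by
          rw [mul_pow]; ring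

end Aux6


namespace Aux7
open Aux Aux2 Aux3 Aux4 Aux5 Aux6
variable {d : ℕ}

lemma tsupport_comp_smul (θ : Euc d → ℂ) (ρ : ℝ) (hρ : ρ ≠ 0) :
    tsupport (fun x : Euc d => θ (ρ⁻¹ • x)) ⊆ (fun y : Euc d => ρ • y) '' tsupport θ := by
  apply closure_minimal
  · intro x hx
    refine ⟨ρ⁻¹ • x, subset_closure hx, ?_⟩
    simp only
    rw [smul_inv_smul₀ hρ]
  · have hmap : IsClosedMap (fun y : Euc d => ρ • y) :=
      (Homeomorph.smulOfNeZero ρ hρ).isClosedMap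
    exact hmap _ (isClosed_tsupport θ)

end Aux7

set_option maxHeartbeats 1600000 in
/-- (b) ⇒ (c). -/
theorem stmt2 {d : ℕ} (M : ℕ → ℝ) (hMpos : ∀ p, 0 < M p) (hM0 : M 0 = 1)
    (hM1 : CondM1 M) (hM2 : CondM2 M) (hM3 : CondM3 M)
    (T : (Euc d → ℂ) → ℂ) (hTlin : LinearOnD M T) (hTud : IsRoumieuUD M T)
    (hθ : ∃ θ : Euc d → ℂ, IsDMp M θ ∧ ∀ x : Euc d, ‖x‖ ≤ 1 → θ x = 1)
    (hb : ∃ r, RClass r ∧ ∀ ε > 0, ∃ K : Set (Euc d), IsCompact K ∧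
      ∀ φ, IsDMp M φ → Disjoint (tsupport φ) K →
        ENNReal.ofReal ‖T φ‖ ≤ ENNReal.ofReal ε * rnorm M r φ) :
    ∀ u : ℕ → Euc d → ℂ, IsRApproxUnit M u → CauchySeq (fun n => T (u n)) := by
  classical
  intro u hu
  obtain ⟨huD, huB, huK⟩ := hu
  obtain ⟨r, hr, hbK⟩ := hb
  obtain ⟨θ, hθD, hθ1⟩ := hθ
  obtain ⟨hθh, hθh1, Qθ, hQθ0, hθbd⟩ := Aux6.isDMp_bound hMpos hθD
  have hθh0 : (0:ℝ) < hθh := lt_of_lt_of_le zero_lt_one hθh1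
  have hc1 : (1:ℝ) ≤ 2 * hθh := by linarith
  have hc0 : (0:ℝ) < 2 * hθh := by linarith
  -- auxiliary sequence r'
  set r' : ℕ → ℝ := fun i => max 1 (r i / (2 * hθh)) with hr'def
  have hr'cl : RClass r' := by
    refine ⟨?_, ?_, ?_⟩
    · have h1 : r 0 / (2 * hθh) ≤ 1 := by
        rw [div_le_one hc0, hr.1]; linarith
      simp [hr'def, max_eq_left h1]
    · intro p q hpq
      simp only [hr'def]
      gcongr
      exact hr.2.1 hpq
    · exact Filter.tendsto_atTop_mono (fun i => le_max_right _ _)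
        (Filter.Tendsto.atTop_div_const hc0 hr.2.2)
  have hr'le : ∀ i, r' i ≤ r i := by
    intro i
    apply max_le (Aux5.rclass_one_le hr i)
    exact div_le_self (le_of_lt (Aux5.rclass_rpos hr i)) hc1
  obtain ⟨N₁, hN₁⟩ := Filter.eventually_atTop.1 (hr.2.2.eventually_ge_atTop (2 * hθh))
  have hkey1 : ∀ n : ℕ, (2 * hθh) ^ n * prodSeq r' n ≤ (2 * hθh) ^ N₁ * prodSeq r n := by
    intro n
    have hp := Aux4.prodle (fun i => (2 * hθh) * r' i) r (2 * hθh) N₁ hc1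
      (fun i => by
        show (0:ℝ) ≤ 2 * hθh * r' i
        have h1 : (1:ℝ) ≤ r' i := le_max_left _ _
        nlinarith)
      (fun i => Aux5.rclass_rpos hr i)
      (fun i => by
        show 2 * hθh * r' i ≤ 2 * hθh * r i
        have h1 := hr'le i
        nlinarith)
      (fun i hi => by
        show 2 * hθh * r' i ≤ r i
        have h1 : (2 * hθh) * r' i = max (2 * hθh) (r i) := by
          simp only [hr'def]
          rw [mul_max_of_nonneg _ _ (le_of_lt hc0), mul_one,
            mul_div_cancel₀ _ (ne_of_gt hc0)]
        rw [h1, max_eq_right (hN₁ i hi)]) n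
    have he : ∏ i ∈ Finset.range (n + 1), ((2 * hθh) * r' i)
        = (2 * hθh) ^ (n + 1) * prodSeq r' n := by
      rw [Finset.prod_mul_distrib, Finset.prod_const, Finset.card_range]
      rfl
    rw [he] at hp
    calc (2 * hθh) ^ n * prodSeq r' n
        ≤ (2 * hθh) ^ (n + 1) * prodSeq r' n := by
          apply mul_le_mul_of_nonneg_right (pow_le_pow_right₀ hc1 (by omega))
          exact le_of_lt (Aux5.prodSeq_pos hr'cl n)
      _ ≤ (2 * hθh) ^ N₁ * prodSeq r n := by
          calc (2 * hθh) ^ (n + 1) * prodSeq r' n ≤ (2 * hθh) ^ N₁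
              * ∏ i ∈ Finset.range (n + 1), r i := hp
            _ = (2 * hθh) ^ N₁ * prodSeq r n := rfl
  -- bounds on u n
  have hBrfin := huB r hr
  have hBr0 : (0:ℝ) ≤ (⨆ n, rnorm M r (u n)).toReal := ENNReal.toReal_nonneg
  set Br := (⨆ n, rnorm M r (u n)).toReal with hBrdef
  have hBrbd : ∀ (n : ℕ) (k : Fin d → ℕ) (x : Euc d),
      ‖mderiv k (u n) x‖ ≤ Br * (prodSeq r (∑ i, k i) * M (∑ i, k i)) := fun n =>
    Aux5.rnorm_bound hr hMpos hBrfin.ne (le_iSup (fun n => rnorm M r (u n)) n)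
  have hBr'fin := huB r' hr'cl
  have hBr'0 : (0:ℝ) ≤ (⨆ n, rnorm M r' (u n)).toReal := ENNReal.toReal_nonneg
  set Br' := (⨆ n, rnorm M r' (u n)).toReal with hBr'def
  have hBr'bd : ∀ (n : ℕ) (k : Fin d → ℕ) (x : Euc d),
      ‖mderiv k (u n) x‖ ≤ Br' * (prodSeq r' (∑ i, k i) * M (∑ i, k i)) := fun n =>
    Aux5.rnorm_bound hr'cl hMpos hBr'fin.ne (le_iSup (fun n => rnorm M r' (u n)) n)
  set C₃ : ℝ := 2 * Br + Qθ * (2 * Br') * (2 * hθh) ^ N₁ with hC₃def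
  have hC₃0 : 0 ≤ C₃ := by positivity
  rw [Metric.cauchySeq_iff]
  intro ε hε
  have hε'0 : 0 < ε / (2 * (C₃ + 1)) := by positivity
  obtain ⟨K, hKcomp, hKest⟩ := hbK _ hε'0
  obtain ⟨R, hRK⟩ := hKcomp.isBounded.subset_closedBall 0
  set ρ : ℝ := max 1 (R + 1) with hρdef
  have hρ1 : 1 ≤ ρ := le_max_left _ _
  have hρ0 : 0 < ρ := lt_of_lt_of_le zero_lt_one hρ1
  have hKρ : ∀ x ∈ K, ‖x‖ < ρ := by
    intro x hx
    have h1 := hRK hx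
    rw [Metric.mem_closedBall, dist_zero_right] at h1
    calc ‖x‖ ≤ R := h1
      _ < R + 1 := by linarith
      _ ≤ ρ := le_max_right _ _
  set θρ : Euc d → ℂ := fun x => θ (ρ⁻¹ • x) with hθρdef
  have hθρsm : ContDiff ℝ (⊤ : ℕ∞) θρ := Aux2.contDiff_comp_smul ρ⁻¹ θ hθD.1
  have hθρ1 : ∀ x : Euc d, ‖x‖ ≤ ρ → θρ x = 1 := by
    intro x hx
    apply hθ1
    rw [norm_smul, Real.norm_eq_abs, abs_inv, abs_of_pos hρ0, ← div_eq_inv_mul]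
    rw [div_le_one hρ0]
    exact hx
  set L : Set (Euc d) := (fun y : Euc d => ρ • y) '' tsupport θ with hLdef
  have hLcomp : IsCompact L := hθD.2.1.image (continuous_const_smul ρ)
  have hθρsupp : tsupport θρ ⊆ L := Aux7.tsupport_comp_smul θ ρ (ne_of_gt hρ0)
  have hθρcs : HasCompactSupport θρ :=
    IsCompact.of_isClosed_subset hLcomp (isClosed_tsupport θρ) hθρsupp
  have hθρbd : ∀ (k : Fin d → ℕ) (x : Euc d),
      ‖mderiv k θρ x‖ ≤ Qθ * (hθh ^ (∑ i, k i) * M (∑ i, k i)) := by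
    intro k x
    have he : mderiv k θρ = fun x => (ρ⁻¹ ^ (∑ j, k j)) • mderiv k θ (ρ⁻¹ • x) := by
      rw [hθρdef]
      exact Aux2.mderiv_comp_smul k ρ⁻¹ θ hθD.1
    rw [he, norm_smul, Real.norm_eq_abs, abs_pow, abs_inv, abs_of_pos hρ0]
    have h1 : (ρ⁻¹) ^ (∑ j, k j) ≤ 1 := by
      apply pow_le_one₀ (by positivity)
      rw [inv_le_one_iff₀]
      right; exact hρ1
    calc (ρ⁻¹) ^ (∑ j, k j) * ‖mderiv k θ (ρ⁻¹ • x)‖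
        ≤ 1 * (Qθ * (hθh ^ (∑ i, k i) * M (∑ i, k i))) := by
          apply mul_le_mul h1 (hθbd k _) (norm_nonneg _)
          norm_num
      _ = Qθ * (hθh ^ (∑ i, k i) * M (∑ i, k i)) := one_mul _
  have hθρD : IsDMp M θρ :=
    ⟨hθρsm, hθρcs, hθh, hθh0, Aux6.hnorm_lt_top (Aux5.hnorm_le hθh0 hMpos hθρbd)⟩
  -- Roumieu estimate on L
  obtain ⟨s, hs, C_L, hCL0, hTL⟩ := hTud L hLcomp
  obtain ⟨h₀, hh₀, htend⟩ := huK L hLcomp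
  set h₂ : ℝ := max hθh h₀ with hh₂def
  have hh₂1 : 1 ≤ h₂ := le_trans hθh1 (le_max_left _ _)
  have hc₂1 : (1:ℝ) ≤ 2 * h₂ := by linarith
  obtain ⟨N₂, hN₂⟩ := Filter.eventually_atTop.1 (hs.2.2.eventually_ge_atTop (2 * h₂))
  have hkey2 : ∀ n : ℕ, (2 * h₂) ^ n ≤ (2 * h₂) ^ N₂ * prodSeq s n := by
    intro n
    have hp := Aux4.prodle (fun _ => 2 * h₂) s (2 * h₂) N₂ hc₂1
      (fun i => by show (0:ℝ) ≤ 2 * h₂; linarith) (fun i => Aux5.rclass_rpos hs i)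
      (fun i => by
        show 2 * h₂ ≤ 2 * h₂ * s i
        exact le_mul_of_one_le_right (by linarith) (Aux5.rclass_one_le hs i))
      (fun i hi => hN₂ i hi) n
    have he : ∏ _i ∈ Finset.range (n + 1), (2 * h₂) = (2 * h₂) ^ (n + 1) := by
      rw [Finset.prod_const, Finset.card_range]
    rw [he] at hp
    calc (2 * h₂) ^ n ≤ (2 * h₂) ^ (n + 1) := pow_le_pow_right₀ hc₂1 (by omega)
      _ ≤ (2 * h₂) ^ N₂ * prodSeq s n := hp
  set X : ℝ := C_L * Qθ * (2 * h₂) ^ N₂ with hXdef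
  have hX0 : 0 ≤ X := by positivity
  set δb : ℝ := ε / (4 * (X + 1)) with hδbdef
  have hδb0 : 0 < δb := by positivity
  have hev : ∀ᶠ n in Filter.atTop,
      qnormK M L h₀ (fun x => u n x - 1) < ENNReal.ofReal δb :=
    htend.eventually_lt_const (ENNReal.ofReal_pos.2 hδb0)
  obtain ⟨N₀, hN₀⟩ := Filter.eventually_atTop.1 hev
  refine ⟨N₀, fun a ha b hb => ?_⟩
  -- the pair estimate
  set ψ : Euc d → ℂ := fun x => u a x - u b x with hψdef
  have hψsm : ContDiff ℝ (⊤ : ℕ∞) ψ := ((huD a).1).sub ((huD b).1)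
  have hψD : IsDMp M ψ := Aux6.isDMp_sub hMpos (huD a) (huD b)
  set φ₁ : Euc d → ℂ := fun x => θρ x * ψ x with hφ₁def
  have hφ₁sm : ContDiff ℝ (⊤ : ℕ∞) φ₁ := hθρsm.mul hψsm
  have hφ₁D : IsDMp M φ₁ := Aux6.isDMp_mul hMpos hM0 hM1 hθρD hψD
  set φ₂ : Euc d → ℂ := fun x => ψ x - φ₁ x with hφ₂def
  have hφ₂D : IsDMp M φ₂ := Aux6.isDMp_sub hMpos hψD hφ₁D
  -- linearity
  have hTa : T (u a) = T ψ + T (u b) := by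
    have h1 : ψ + u b = u a := by
      funext x
      simp only [Pi.add_apply, hψdef]
      ring
    rw [← h1]
    exact hTlin.1 ψ (u b) hψD (huD b)
  have hTψdec : T ψ = T φ₁ + T φ₂ := by
    have h2 : φ₁ + φ₂ = ψ := by
      funext x
      simp only [Pi.add_apply, hφ₂def]
      ring
    rw [← h2]
    exact hTlin.1 φ₁ φ₂ hφ₁D hφ₂D
  -- smallness of ψ on L
  have hbump : ∀ (j : Fin d → ℕ) (x : Euc d), x ∈ L →
      ‖mderiv j ψ x‖ ≤ 2 * δb * (h₀ ^ (∑ i, j i) * M (∑ i, j i)) := by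
    intro j x hx
    have hqa : qnormK M L h₀ (fun x => u a x - 1) ≤ ENNReal.ofReal δb :=
      le_of_lt (hN₀ a ha)
    have hqb : qnormK M L h₀ (fun x => u b x - 1) ≤ ENNReal.ofReal δb :=
      le_of_lt (hN₀ b hb)
    have h1 := Aux5.qnormK_bound hh₀ hMpos (le_of_lt hδb0) hqa j x hx
    have h2 := Aux5.qnormK_bound hh₀ hMpos (le_of_lt hδb0) hqb j x hx
    have heq : ψ = fun y => (fun z => u a z - 1) y - (fun z => u b z - 1) y := by
      funext y
      simp only [hψdef]
      ring
    rw [heq, Aux2.mderiv_sub j _ _ (((huD a).1).sub contDiff_const)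
      (((huD b).1).sub contDiff_const)]
    calc ‖mderiv j (fun z => u a z - 1) x - mderiv j (fun z => u b z - 1) x‖
        ≤ ‖mderiv j (fun z => u a z - 1) x‖ + ‖mderiv j (fun z => u b z - 1) x‖ :=
          norm_sub_le _ _
      _ ≤ δb * (h₀ ^ (∑ i, j i) * M (∑ i, j i)) + δb * (h₀ ^ (∑ i, j i) * M (∑ i, j i)) :=
          add_le_add h1 h2
      _ = 2 * δb * (h₀ ^ (∑ i, j i) * M (∑ i, j i)) := by ring
  -- support facts
  have hsuppφ₁ : tsupport φ₁ ⊆ L := by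
    refine subset_trans (closure_mono ?_) hθρsupp
    intro y hy
    rw [Function.mem_support] at hy ⊢
    intro h0
    apply hy
    simp only [hφ₁def, h0, zero_mul]
  have hφ₂zero : ∀ y : Euc d, ‖y‖ ≤ ρ → φ₂ y = 0 := by
    intro y hy
    simp only [hφ₂def, hφ₁def, hθρ1 y hy]
    ring
  have hsupp2 : tsupport φ₂ ⊆ {y : Euc d | ρ ≤ ‖y‖} := by
    apply closure_minimal
    · intro y hy
      rw [Function.mem_support] at hy
      rw [Set.mem_setOf_eq]
      by_contra hcon
      push_neg at hcon
      exact hy (hφ₂zero y (le_of_lt hcon))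
    · exact isClosed_le continuous_const continuous_norm
  have hsuppφ₂ : Disjoint (tsupport φ₂) K := by
    rw [Set.disjoint_left]
    intro y hy hyK
    exact absurd (hsupp2 hy) (not_le.2 (hKρ y hyK))
  -- term 1 : rnorm s bound
  have hrnφ₁ : rnorm M s φ₁ ≤ ENNReal.ofReal (Qθ * (2 * δb) * (2 * h₂) ^ N₂) := by
    apply Aux5.rnorm_le hs hMpos
    intro k x
    by_cases hxL : x ∈ L
    · have hW : ∀ p q : ℕ, p + q = ∑ i, k i →
          (Qθ * (hθh ^ p * M p)) * (2 * δb * (h₀ ^ q * M q))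
            ≤ Qθ * (2 * δb) * (h₂ ^ (∑ i, k i) * M (∑ i, k i)) := by
        intro p q hpq
        have e1 : hθh ^ p ≤ h₂ ^ p := pow_le_pow_left₀ (by linarith) (le_max_left _ _) _
        have e2 : h₀ ^ q ≤ h₂ ^ q := pow_le_pow_left₀ (by linarith) (le_max_right _ _) _
        have e3 : h₂ ^ p * h₂ ^ q = h₂ ^ (∑ i, k i) := by rw [← pow_add, hpq]
        have e4 : M p * M q ≤ M (p + q) := Aux4.M_mul_le M hMpos hM0 hM1 p q
        have hMp := le_of_lt (hMpos p)
        have hMq := le_of_lt (hMpos q)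
        calc (Qθ * (hθh ^ p * M p)) * (2 * δb * (h₀ ^ q * M q))
            = (Qθ * (2 * δb)) * ((hθh ^ p * h₀ ^ q) * (M p * M q)) := by ring
          _ ≤ (Qθ * (2 * δb)) * ((h₂ ^ p * h₂ ^ q) * (M p * M q)) := by
              apply mul_le_mul_of_nonneg_left _ (by positivity)
              apply mul_le_mul_of_nonneg_right _ (by positivity)
              exact mul_le_mul e1 e2 (by positivity) (by positivity)
          _ ≤ (Qθ * (2 * δb)) * ((h₂ ^ p * h₂ ^ q) * M (p + q)) := by
              apply mul_le_mul_of_nonneg_left _ (by positivity)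
              exact mul_le_mul_of_nonneg_left e4 (by positivity)
          _ = Qθ * (2 * δb) * (h₂ ^ (∑ i, k i) * M (∑ i, k i)) := by rw [e3, hpq]
      have hlb := Aux4.leibniz_bound θρ ψ hθρsm hψsm k x
        (fun p => Qθ * (hθh ^ p * M p)) (fun q => 2 * δb * (h₀ ^ q * M q))
        (Qθ * (2 * δb) * (h₂ ^ (∑ i, k i) * M (∑ i, k i)))
        (fun p => by have := le_of_lt (hMpos p); positivity)
        (fun j _ => hθρbd j x) (fun j _ => hbump j x hxL) hW
      rw [← hφ₁def] at hlb
      calc ‖mderiv k φ₁ x‖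
          ≤ 2 ^ (∑ i, k i) * (Qθ * (2 * δb) * (h₂ ^ (∑ i, k i) * M (∑ i, k i))) := hlb
        _ = Qθ * (2 * δb) * ((2 * h₂) ^ (∑ i, k i) * M (∑ i, k i)) := by
            rw [mul_pow]; ring
        _ ≤ Qθ * (2 * δb) * (((2 * h₂) ^ N₂ * prodSeq s (∑ i, k i)) * M (∑ i, k i)) := by
            apply mul_le_mul_of_nonneg_left _ (by positivity)
            exact mul_le_mul_of_nonneg_right (hkey2 _) (le_of_lt (hMpos _))
        _ = Qθ * (2 * δb) * (2 * h₂) ^ N₂ * (prodSeq s (∑ i, k i) * M (∑ i, k i)) := by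
            ring
    · have hx0 : mderiv k φ₁ x = 0 := by
        apply Aux2.mderiv_eq_zero_of_eqOn_zero
          (isOpen_compl_iff.2 (isClosed_tsupport θρ)) k φ₁ ?_ x ?_
        · intro y hy
          have h0 : θρ y = 0 := image_eq_zero_of_notMem_tsupport hy
          simp only [hφ₁def, h0, zero_mul]
        · exact fun hmem => hxL (hθρsupp hmem)
      rw [hx0, norm_zero]
      have g1 := le_of_lt (hMpos (∑ i, k i))
      have g2 := le_of_lt (Aux5.prodSeq_pos hs (∑ i, k i))
      have g3 : (0:ℝ) ≤ 2 * δb := by linarith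
      have g4 : (0:ℝ) ≤ (2 * h₂) ^ N₂ := pow_nonneg (by linarith) _
      exact mul_nonneg (mul_nonneg (mul_nonneg hQθ0 g3) g4) (mul_nonneg g2 g1)
  -- term 1 : real bound
  have hTφ₁ : ‖T φ₁‖ ≤ C_L * (Qθ * (2 * δb) * (2 * h₂) ^ N₂) := by
    have h1 := hTL φ₁ hφ₁D hsuppφ₁
    have h2 : ENNReal.ofReal ‖T φ₁‖
        ≤ ENNReal.ofReal C_L * ENNReal.ofReal (Qθ * (2 * δb) * (2 * h₂) ^ N₂) :=
      le_trans h1 (mul_le_mul_right hrnφ₁ _)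
    rw [← ENNReal.ofReal_mul (le_of_lt hCL0)] at h2
    exact (ENNReal.ofReal_le_ofReal_iff (by positivity)).1 h2
  -- term 2 : rnorm r bound
  have hrnφ₂ : rnorm M r φ₂ ≤ ENNReal.ofReal C₃ := by
    apply Aux5.rnorm_le hr hMpos
    intro k x
    have hψbd : ‖mderiv k ψ x‖ ≤ 2 * Br * (prodSeq r (∑ i, k i) * M (∑ i, k i)) := by
      rw [hψdef, Aux2.mderiv_sub k _ _ (huD a).1 (huD b).1]
      calc ‖mderiv k (u a) x - mderiv k (u b) x‖
          ≤ ‖mderiv k (u a) x‖ + ‖mderiv k (u b) x‖ := norm_sub_le _ _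
        _ ≤ Br * (prodSeq r (∑ i, k i) * M (∑ i, k i))
            + Br * (prodSeq r (∑ i, k i) * M (∑ i, k i)) :=
            add_le_add (hBrbd a k x) (hBrbd b k x)
        _ = 2 * Br * (prodSeq r (∑ i, k i) * M (∑ i, k i)) := by ring
    have hφ₁bd : ‖mderiv k φ₁ x‖
        ≤ Qθ * (2 * Br') * (2 * hθh) ^ N₁ * (prodSeq r (∑ i, k i) * M (∑ i, k i)) := by
      have hψbd' : ∀ (j : Fin d → ℕ), j ≤ k →
          ‖mderiv j ψ x‖ ≤ 2 * Br' * (prodSeq r' (∑ i, j i) * M (∑ i, j i)) := by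
        intro j _
        rw [hψdef, Aux2.mderiv_sub j _ _ (huD a).1 (huD b).1]
        calc ‖mderiv j (u a) x - mderiv j (u b) x‖
            ≤ ‖mderiv j (u a) x‖ + ‖mderiv j (u b) x‖ := norm_sub_le _ _
          _ ≤ Br' * (prodSeq r' (∑ i, j i) * M (∑ i, j i))
              + Br' * (prodSeq r' (∑ i, j i) * M (∑ i, j i)) :=
              add_le_add (hBr'bd a j x) (hBr'bd b j x)
          _ = 2 * Br' * (prodSeq r' (∑ i, j i) * M (∑ i, j i)) := by ring
      have hW : ∀ p q : ℕ, p + q = ∑ i, k i →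
          (Qθ * (hθh ^ p * M p)) * (2 * Br' * (prodSeq r' q * M q))
            ≤ Qθ * (2 * Br') * (hθh ^ (∑ i, k i) * (prodSeq r' (∑ i, k i) * M (∑ i, k i))) := by
        intro p q hpq
        have e1 : hθh ^ p ≤ hθh ^ (∑ i, k i) :=
          pow_le_pow_right₀ hθh1 (by omega)
        have e2 : prodSeq r' q ≤ prodSeq r' (∑ i, k i) :=
          Aux5.prodSeq_mono hr'cl (by omega)
        have e4 : M p * M q ≤ M (p + q) := Aux4.M_mul_le M hMpos hM0 hM1 p q
        have hP0 : (0:ℝ) < prodSeq r' q := Aux5.prodSeq_pos hr'cl q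
        have hP1 : (0:ℝ) < prodSeq r' (∑ i, k i) := Aux5.prodSeq_pos hr'cl _
        have hMp := le_of_lt (hMpos p)
        have hMq := le_of_lt (hMpos q)
        have hMn := le_of_lt (hMpos (∑ i, k i))
        calc (Qθ * (hθh ^ p * M p)) * (2 * Br' * (prodSeq r' q * M q))
            = (Qθ * (2 * Br')) * ((hθh ^ p * prodSeq r' q) * (M p * M q)) := by ring
          _ ≤ (Qθ * (2 * Br')) * ((hθh ^ (∑ i, k i) * prodSeq r' (∑ i, k i)) * (M p * M q)) := by
              apply mul_le_mul_of_nonneg_left _ (by positivity)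
              apply mul_le_mul_of_nonneg_right _ (by positivity)
              apply mul_le_mul e1 e2 (le_of_lt hP0) (by positivity)
          _ ≤ (Qθ * (2 * Br')) * ((hθh ^ (∑ i, k i) * prodSeq r' (∑ i, k i)) * M (p + q)) := by
              apply mul_le_mul_of_nonneg_left _ (by positivity)
              apply mul_le_mul_of_nonneg_left e4 (by positivity)
          _ = Qθ * (2 * Br') * (hθh ^ (∑ i, k i) * (prodSeq r' (∑ i, k i) * M (∑ i, k i))) := by
              rw [hpq]; ring
      have hlb := Aux4.leibniz_bound θρ ψ hθρsm hψsm k x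
        (fun p => Qθ * (hθh ^ p * M p)) (fun q => 2 * Br' * (prodSeq r' q * M q))
        (Qθ * (2 * Br') * (hθh ^ (∑ i, k i) * (prodSeq r' (∑ i, k i) * M (∑ i, k i))))
        (fun p => by have := le_of_lt (hMpos p); positivity)
        (fun j _ => hθρbd j x) hψbd' hW
      rw [← hφ₁def] at hlb
      calc ‖mderiv k φ₁ x‖
          ≤ 2 ^ (∑ i, k i) * (Qθ * (2 * Br')
            * (hθh ^ (∑ i, k i) * (prodSeq r' (∑ i, k i) * M (∑ i, k i)))) := hlb
        _ = Qθ * (2 * Br')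
            * (((2 * hθh) ^ (∑ i, k i) * prodSeq r' (∑ i, k i)) * M (∑ i, k i)) := by
            rw [mul_pow]; ring
        _ ≤ Qθ * (2 * Br')
            * (((2 * hθh) ^ N₁ * prodSeq r (∑ i, k i)) * M (∑ i, k i)) := by
            apply mul_le_mul_of_nonneg_left _ (by positivity)
            exact mul_le_mul_of_nonneg_right (hkey1 _) (le_of_lt (hMpos _))
        _ = Qθ * (2 * Br') * (2 * hθh) ^ N₁ * (prodSeq r (∑ i, k i) * M (∑ i, k i)) := by
            ring
    have hmsub : mderiv k φ₂ x = mderiv k ψ x - mderiv k φ₁ x := by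
      have h1 : φ₂ = fun y => ψ y - φ₁ y := by
        funext y
        simp only [hφ₂def]
      rw [h1, Aux2.mderiv_sub k _ _ hψsm hφ₁sm]
    rw [hmsub]
    calc ‖mderiv k ψ x - mderiv k φ₁ x‖
        ≤ ‖mderiv k ψ x‖ + ‖mderiv k φ₁ x‖ := norm_sub_le _ _
      _ ≤ 2 * Br * (prodSeq r (∑ i, k i) * M (∑ i, k i))
          + Qθ * (2 * Br') * (2 * hθh) ^ N₁ * (prodSeq r (∑ i, k i) * M (∑ i, k i)) :=
          add_le_add hψbd hφ₁bd
      _ = C₃ * (prodSeq r (∑ i, k i) * M (∑ i, k i)) := by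
          rw [hC₃def]; ring
  -- term 2 : real bound
  have hTφ₂ : ‖T φ₂‖ ≤ ε / (2 * (C₃ + 1)) * C₃ := by
    have h1 := hKest φ₂ hφ₂D hsuppφ₂
    have h2 : ENNReal.ofReal ‖T φ₂‖
        ≤ ENNReal.ofReal (ε / (2 * (C₃ + 1))) * ENNReal.ofReal C₃ :=
      le_trans h1 (mul_le_mul_right hrnφ₂ _)
    rw [← ENNReal.ofReal_mul (le_of_lt hε'0)] at h2
    exact (ENNReal.ofReal_le_ofReal_iff (by positivity)).1 h2
  -- assemble
  have hdist : dist (T (u a)) (T (u b)) = ‖T ψ‖ := by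
    rw [dist_eq_norm]
    congr 1
    rw [hTa]
    ring
  rw [hdist, hTψdec]
  calc ‖T φ₁ + T φ₂‖ ≤ ‖T φ₁‖ + ‖T φ₂‖ := norm_add_le _ _
    _ ≤ C_L * (Qθ * (2 * δb) * (2 * h₂) ^ N₂) + ε / (2 * (C₃ + 1)) * C₃ :=
        add_le_add hTφ₁ hTφ₂
    _ < ε := by
        have e1 : C_L * (Qθ * (2 * δb) * (2 * h₂) ^ N₂) = 2 * (δb * X) := by
          rw [hXdef]; ring
        have e2 : δb * (4 * (X + 1)) = ε := by
          rw [hδbdef]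
          field_simp
        have e3 : ε / (2 * (C₃ + 1)) * (2 * (C₃ + 1)) = ε := by
          field_simp
        have h4 : 0 ≤ δb * X := mul_nonneg (le_of_lt hδb0) hX0
        nlinarith [hε'0, hδb0, hC₃0, hX0]


end
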